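/- arXiv:1912.09219 — 2 statements merged into one kernel-verified Lean document; each statement's English description precedes it below -/
import Mathlib

section
/- For x, y ∈ ℝᵈ distinct and m a positive integer, the iterated Laplacian in y of ln(1/‖x-y‖) satisfies (-Δ)_y^m ln(1/‖x-y‖) = 2^{m-1}(m-1)! · (∏_{k=1}^m (d-2k)) / ‖x-y‖^{2m}. -/
/-!
For a radial function `w ↦ φ (‖x - w‖²)` the chain rule gives the Laplacian `4 t φ''(t) + 2 d φ'(t)`
at `t = ‖x - y‖²`. Since `ln (1/‖x - w‖) = -(ln t) / 2`, one application of `-Δ` gives `(d - 2) t⁻¹`,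
and for `φ t = C t^(-n)` it gives `2n (d - 2n - 2) C t^(-n-1)`; multiplying these factors yields the
constant. The Laplacian at `y` only sees a neighbourhood of `y`, so the singularity at `x` never
enters the induction.
-/

/-- The Euclidean Laplacian of `f : ℝᵈ → ℝ` as sum of second partial derivatives. -/
noncomputable def lap (d : ℕ) (f : EuclideanSpace ℝ (Fin d) → ℝ) (x : EuclideanSpace ℝ (Fin d)) : ℝ :=
  ∑ i : Fin d,
    fderiv ℝ (fun y => fderiv ℝ f y (EuclideanSpace.single i 1)) x (EuclideanSpace.single i 1)

open Real Filter Topology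

section

variable {d : ℕ}

local notation "E" => EuclideanSpace ℝ (Fin d)

theorem Filter.EventuallyEq.lap_eq {f g : E → ℝ} {y : E} (h : f =ᶠ[𝓝 y] g) :
    lap d f y = lap d g y := by
  refine Finset.sum_congr rfl fun i _ => ?_
  have hpartial : (fun z => fderiv ℝ f z (EuclideanSpace.single i 1))
      =ᶠ[𝓝 y] fun z => fderiv ℝ g z (EuclideanSpace.single i 1) :=
    (h.fderiv (𝕜 := ℝ)).mono fun z hz => by simp only [hz]
  rw [hpartial.fderiv_eq]

variable (x : EuclideanSpace ℝ (Fin d)) {φ : ℝ → ℝ}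

theorem hasFDerivAt_comp_norm_sub_sq {φ' : ℝ} {z : E}
    (hφ : HasDerivAt φ φ' (‖x - z‖ ^ 2)) :
    HasFDerivAt (fun w : E => φ (‖x - w‖ ^ 2))
      (φ' • 2 • (innerSL ℝ (x - z)).comp (-ContinuousLinearMap.id ℝ E)) z :=
  hφ.comp_hasFDerivAt z ((hasFDerivAt_id z).const_sub x).norm_sq

theorem fderiv_comp_norm_sub_sq_single {φ' : ℝ} {z : E}
    (hφ : HasDerivAt φ φ' (‖x - z‖ ^ 2)) (i : Fin d) :
    fderiv ℝ (fun w : E => φ (‖x - w‖ ^ 2)) z (EuclideanSpace.single i 1)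
      = -2 * φ' * (x - z) i := by
  rw [(hasFDerivAt_comp_norm_sub_sq x hφ).fderiv]
  simp only [map_sub, ContinuousLinearMap.comp_neg, ContinuousLinearMap.comp_id, neg_sub,
    smul_apply, sub_apply, coe_innerSL_apply, EuclideanSpace.inner_single_right, ringHom_apply,
    one_mul, nsmul_eq_mul, Nat.cast_ofNat, smul_eq_mul, neg_mul, PiLp.sub_apply]
  ring

theorem second_partial_comp_norm_sub_sq {φ' φ'' : ℝ → ℝ}
    (hφ : ∀ t, 0 < t → HasDerivAt φ (φ' t) t) {y : E} (hy : y ≠ x)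
    (hφ' : HasDerivAt φ' (φ'' (‖x - y‖ ^ 2)) (‖x - y‖ ^ 2)) (i : Fin d) :
    fderiv ℝ (fun z => fderiv ℝ (fun w : E => φ (‖x - w‖ ^ 2)) z (EuclideanSpace.single i 1))
        y (EuclideanSpace.single i 1)
      = 4 * φ'' (‖x - y‖ ^ 2) * (x - y) i ^ 2 + 2 * φ' (‖x - y‖ ^ 2) := by
  have hpartial :
      (fun z => fderiv ℝ (fun w : E => φ (‖x - w‖ ^ 2)) z (EuclideanSpace.single i 1))
      =ᶠ[𝓝 y] fun z => φ' (‖x - z‖ ^ 2) * (-2 * (x - z) i) := by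
    filter_upwards [isOpen_compl_singleton.mem_nhds hy] with z hz
    rw [fderiv_comp_norm_sub_sq_single x (hφ _ (pow_pos (norm_sub_pos_iff.mpr (Ne.symm hz)) 2))]
    ring
  have hcoord : HasFDerivAt (fun z : E => -2 * (x - z) i)
      ((-2 : ℝ) • (EuclideanSpace.proj i).comp (-ContinuousLinearMap.id ℝ E)) y := by
    simpa using ((EuclideanSpace.proj (𝕜 := ℝ) i).hasFDerivAt.comp y
      ((hasFDerivAt_id y).const_sub x)).const_mul (-2 : ℝ)
  rw [hpartial.fderiv_eq, ((hasFDerivAt_comp_norm_sub_sq x hφ').fun_mul hcoord).fderiv]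
  simp only [ContinuousLinearMap.comp_neg, ContinuousLinearMap.comp_id, smul_neg, neg_smul,
    neg_neg, PiLp.sub_apply, neg_mul, map_sub, neg_sub, add_apply, smul_apply, PiLp.proj_apply,
    PiLp.single_eq_same, smul_eq_mul, mul_one, neg_apply, sub_apply, coe_innerSL_apply,
    EuclideanSpace.inner_single_right, ringHom_apply, one_mul, nsmul_eq_mul, Nat.cast_ofNat]
  ring

theorem lap_comp_norm_sub_sq {φ' φ'' : ℝ → ℝ}
    (hφ : ∀ t, 0 < t → HasDerivAt φ (φ' t) t)
    (hφ' : ∀ t, 0 < t → HasDerivAt φ' (φ'' t) t) {y : E} (hy : y ≠ x) :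
    lap d (fun w : E => φ (‖x - w‖ ^ 2)) y
      = 4 * ‖x - y‖ ^ 2 * φ'' (‖x - y‖ ^ 2) + 2 * d * φ' (‖x - y‖ ^ 2) := by
  have ht : 0 < ‖x - y‖ ^ 2 := pow_pos (norm_sub_pos_iff.mpr hy.symm) 2
  simp only [lap, second_partial_comp_norm_sub_sq x hφ hy (hφ' _ ht), Finset.sum_add_distrib,
    ← Finset.mul_sum, ← EuclideanSpace.real_norm_sq_eq, Finset.sum_const, Finset.card_univ,
    Fintype.card_fin, nsmul_eq_mul]
  ring

theorem lap_const_mul_norm_sub_sq_zpow (c : ℝ) (p : ℤ) {y : E} (hy : y ≠ x) :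
    lap d (fun w => c * (‖x - w‖ ^ 2) ^ p) y
      = c * (2 * p * (2 * p - 2 + d)) * (‖x - y‖ ^ 2) ^ (p - 1) := by
  have ht : 0 < ‖x - y‖ ^ 2 := pow_pos (norm_sub_pos_iff.mpr hy.symm) 2
  rw [lap_comp_norm_sub_sq x (φ' := fun t => c * (p * t ^ (p - 1)))
    (φ'' := fun t => c * (p * ((p - 1 : ℤ) * t ^ (p - 1 - 1))))
    (fun t hpos => (hasDerivAt_zpow p t (.inl hpos.ne')).const_mul c)
    (fun t hpos => ((hasDerivAt_zpow (p - 1) t (.inl hpos.ne')).const_mul _).const_mul c) hy]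
  have hpow : ‖x - y‖ ^ 2 * (‖x - y‖ ^ 2) ^ (p - 1 - 1) = (‖x - y‖ ^ 2) ^ (p - 1) := by
    rw [← zpow_one_add₀ ht.ne']
    ring_nf
  push_cast
  linear_combination (4 * c * p * (p - 1)) * hpow

theorem lap_log_inv_norm_sub {y : E} (hy : y ≠ x) :
    lap d (fun w => log (1 / ‖x - w‖)) y = (2 - d) / ‖x - y‖ ^ 2 := by
  have hlog : (fun w => log (1 / ‖x - w‖)) = fun w => -log (‖x - w‖ ^ 2) / 2 := by
    ext w
    rw [one_div, log_inv, log_pow]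
    push_cast
    ring
  have ht : 0 < ‖x - y‖ ^ 2 := pow_pos (norm_sub_pos_iff.mpr hy.symm) 2
  rw [hlog, lap_comp_norm_sub_sq x (φ := fun t => -log t / 2) (φ' := fun t => -t⁻¹ / 2)
    (φ'' := fun t => (t ^ 2)⁻¹ / 2)
    (fun t hpos => ((hasDerivAt_log hpos.ne').neg).div_const 2)
    (fun t hpos => by simpa using ((hasDerivAt_inv hpos.ne').neg).div_const 2) hy]
  field_simp
  ring

theorem iterate_neg_lap_log_inv_norm_sub (n : ℕ) {z : E} (hz : z ≠ x) :
    ((fun g => fun w => -lap d g w)^[n + 1] (fun w => log (1 / ‖x - w‖))) z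
      = 2 ^ n * n.factorial * (∏ k ∈ Finset.Icc 1 (n + 1), ((d : ℝ) - 2 * k))
          * (‖x - z‖ ^ 2) ^ (-(n + 1 : ℤ)) := by
  induction n generalizing z with
  | zero =>
    rw [Function.iterate_one, lap_log_inv_norm_sub x hz]
    simp only [pow_zero, Nat.factorial_zero, Nat.cast_one, mul_one, zero_add, Finset.Icc_self,
      Finset.prod_singleton, one_mul, CharP.cast_eq_zero, zpow_neg, zpow_one]
    ring
  | succ n ih =>
    set C := 2 ^ n * n.factorial * (∏ k ∈ Finset.Icc 1 (n + 1), ((d : ℝ) - 2 * k)) with hC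
    have hnear : (fun g => fun w => -lap d g w)^[n + 1] (fun w => log (1 / ‖x - w‖))
        =ᶠ[𝓝 z] fun w => C * (‖x - w‖ ^ 2) ^ (-(n + 1 : ℤ)) :=
      eventually_of_mem (isOpen_compl_singleton.mem_nhds hz) fun w hw => ih hw
    rw [Function.iterate_succ_apply', hnear.lap_eq, lap_const_mul_norm_sub_sq_zpow x C _ hz,
      Finset.prod_Icc_succ_top (by omega), Nat.factorial_succ, hC]
    push_cast
    ring_nf

end

theorem iterated_neg_laplacian_log_general (d m : ℕ) (hm : 1 ≤ m)
    (x y : EuclideanSpace ℝ (Fin d)) (hxy : y ≠ x) :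
    ((fun g => fun z => -lap d g z)^[m] (fun z => Real.log (1 / ‖x - z‖))) y
      = 2 ^ (m - 1) * (Nat.factorial (m - 1)) *
          (∏ k ∈ Finset.Icc 1 m, ((d : ℝ) - 2 * k)) / ‖x - y‖ ^ (2 * m) := by
  obtain ⟨n, rfl⟩ : ∃ n, m = n + 1 := ⟨m - 1, by omega⟩
  rw [iterate_neg_lap_log_inv_norm_sub x n hxy, Nat.add_sub_cancel, div_eq_mul_inv, pow_mul,
    zpow_neg, ← Nat.cast_succ, zpow_natCast]

theorem iterated_neg_laplacian_log (d m : ℕ) (hd : 2 ≤ d) (hm : 1 ≤ m)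
    (x y : EuclideanSpace ℝ (Fin d)) (hxy : y ≠ x) :
    ((fun g => fun z => -lap d g z)^[m] (fun z => Real.log (1 / ‖x - z‖))) y
      = 2 ^ (m - 1) * (Nat.factorial (m - 1)) *
          (∏ k ∈ Finset.Icc 1 m, ((d : ℝ) - 2 * k)) / ‖x - y‖ ^ (2 * m) :=
  iterated_neg_laplacian_log_general d m hm x y hxy
end

section
/- Law of the total volume: let s, b, d, μ > 0 and Z₀ be a positive random variable with E[Z₀^{-s/b}] ∈ (0,∞). Define, for bounded measurable F: (0,∞) → ℝ, the functional E^L[F] := (∫_ℝ e^{dsc} E[F(e^{dbc} Z₀) exp(-μ e^{dbc} Z₀)] dc) / (∫_ℝ e^{dsc} E[exp(-μ e^{dbc} Z₀)] dc). Then E^L[F] = μ^{s/b}/Γ(s/b) · ∫₀^∞ F(y) y^{s/b - 1} e^{-μ y} dy; i.e., under the Liouville law the total volume e^{dbc}Z₀ has Gamma(s/b, μ) distribution. -/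
/-!
For fixed `ω`, the substitution `y = exp (d b c) Z₀ ω` turns `∫ exp (d s c) G (exp (d b c) Z₀ ω) dc`
into `Z₀ ω ^ (-s/b) / (d b) * ∫₀^∞ y ^ (s/b - 1) G y dy`. By Fubini, numerator and denominator
therefore carry the same factor `E[Z₀ ^ (-s/b)] / (d b)`, which cancels, and the denominator's
remaining integral is the Gamma integral `Γ(s/b) μ ^ (-s/b)`.
-/

open MeasureTheory Real Set

section ExpSubstitution

variable {k z : ℝ}

lemma image_univ_exp_mul_mul (hk : k ≠ 0) (hz : 0 < z) :
    (fun c ↦ exp (k * c) * z) '' univ = Ioi 0 := by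
  ext y
  simp only [image_univ, mem_range, mem_Ioi]
  refine ⟨fun ⟨c, hc⟩ ↦ hc ▸ by positivity, fun hy ↦ ⟨log (y / z) / k, ?_⟩⟩
  rw [mul_div_cancel₀ _ hk, exp_log (by positivity), div_mul_cancel₀ _ hz.ne']

lemma injOn_exp_mul_mul (hk : k ≠ 0) (hz : 0 < z) :
    InjOn (fun c ↦ exp (k * c) * z) univ := fun _ _ _ _ h ↦
  mul_left_cancel₀ hk (exp_injective (mul_right_cancel₀ hz.ne' h))

lemma hasDerivAt_exp_mul_mul (k z c : ℝ) :
    HasDerivAt (fun c ↦ exp (k * c) * z) (exp (k * c) * k * z) c := by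
  simpa using (((hasDerivAt_id c).const_mul k).exp).mul_const z

lemma abs_deriv_smul_rpow_sub_one_mul (hk : k ≠ 0) (hz : 0 < z) (a c : ℝ) (g : ℝ → ℝ) :
    |exp (k * c) * k * z| •
        ((exp (k * c) * z) ^ (a - 1) * g (exp (k * c) * z) * (z ^ (-a) / |k|))
      = exp (k * a * c) * g (exp (k * c) * z) := by
  have hy : 0 < exp (k * c) * z := by positivity
  have hpow : (exp (k * c) * z) ^ (a - 1) * (exp (k * c) * z) = exp (k * a * c) * z ^ a := by
    rw [← rpow_add_one hy.ne', sub_add_cancel, mul_rpow (exp_pos _).le hz.le, ← exp_mul]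
    ring_nf
  have hz_cancel : z ^ a * z ^ (-a) = 1 := by rw [← rpow_add hz, add_neg_cancel, rpow_zero]
  have hk_cancel : |k| / |k| = 1 := div_self (abs_ne_zero.mpr hk)
  rw [smul_eq_mul, abs_mul, abs_mul, abs_of_pos (exp_pos _), abs_of_pos hz]
  calc exp (k * c) * |k| * z *
        ((exp (k * c) * z) ^ (a - 1) * g (exp (k * c) * z) * (z ^ (-a) / |k|))
      = (exp (k * c) * z) ^ (a - 1) * (exp (k * c) * z) * z ^ (-a) *
          g (exp (k * c) * z) * (|k| / |k|) := by ring
    _ = exp (k * a * c) * g (exp (k * c) * z) := by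
      rw [hpow, hk_cancel, mul_assoc (exp _), hz_cancel]; ring

theorem integral_exp_mul_mul_comp_exp_mul_mul (hk : k ≠ 0) (hz : 0 < z) (a : ℝ) (g : ℝ → ℝ) :
    ∫ c, exp (k * a * c) * g (exp (k * c) * z)
      = z ^ (-a) / |k| * ∫ y in Ioi 0, y ^ (a - 1) * g y := by
  simp_rw [← abs_deriv_smul_rpow_sub_one_mul hk hz a _ g]
  rw [← setIntegral_univ, ← integral_image_eq_integral_abs_deriv_smul MeasurableSet.univ
      (fun c _ ↦ (hasDerivAt_exp_mul_mul k z c).hasDerivWithinAt) (injOn_exp_mul_mul hk hz)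
      (fun y ↦ y ^ (a - 1) * g y * (z ^ (-a) / |k|)),
    image_univ_exp_mul_mul hk hz, integral_mul_const, mul_comm]

theorem integrable_exp_mul_mul_comp_exp_mul_mul (hk : k ≠ 0) (hz : 0 < z) {a : ℝ} {g : ℝ → ℝ}
    (hg : IntegrableOn (fun y ↦ y ^ (a - 1) * g y) (Ioi 0)) :
    Integrable (fun c ↦ exp (k * a * c) * g (exp (k * c) * z)) := by
  have h : IntegrableOn (fun y ↦ y ^ (a - 1) * g y * (z ^ (-a) / |k|)) (Ioi 0) :=
    hg.mul_const _
  rw [← image_univ_exp_mul_mul hk hz, integrableOn_image_iff_integrableOn_abs_deriv_smul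
    MeasurableSet.univ (fun c _ ↦ (hasDerivAt_exp_mul_mul k z c).hasDerivWithinAt)
    (injOn_exp_mul_mul hk hz), integrableOn_univ] at h
  simpa only [abs_deriv_smul_rpow_sub_one_mul hk hz] using h

end ExpSubstitution

theorem integral_exp_mul_mul_integral_comp_exp_mul_mul {Ω : Type*} [MeasurableSpace Ω]
    {P : Measure Ω} [SFinite P] {Z : Ω → ℝ} (hZ : Measurable Z) (hZpos : ∀ ω, 0 < Z ω)
    {a k : ℝ} (hZint : Integrable (fun ω ↦ Z ω ^ (-a)) P) (hk : k ≠ 0)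
    {g : ℝ → ℝ} (hg : Measurable g) (hgint : IntegrableOn (fun y ↦ y ^ (a - 1) * g y) (Ioi 0)) :
    ∫ c, exp (k * a * c) * ∫ ω, g (exp (k * c) * Z ω) ∂P
      = (∫ ω, Z ω ^ (-a) ∂P) / |k| * ∫ y in Ioi 0, y ^ (a - 1) * g y := by
  have hmeas : Measurable (fun p : ℝ × Ω ↦ exp (k * a * p.1) * g (exp (k * p.1) * Z p.2)) := by
    fun_prop
  have hnorm (ω : Ω) : ∫ c, ‖exp (k * a * c) * g (exp (k * c) * Z ω)‖
      = Z ω ^ (-a) / |k| * ∫ y in Ioi 0, y ^ (a - 1) * |g y| := by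
    simp_rw [norm_mul, norm_of_nonneg (exp_pos _).le, Real.norm_eq_abs]
    exact integral_exp_mul_mul_comp_exp_mul_mul hk (hZpos ω) a (fun y ↦ |g y|)
  have hprod : Integrable (Function.uncurry fun c ω ↦ exp (k * a * c) * g (exp (k * c) * Z ω))
      (volume.prod P) := by
    refine (integrable_prod_iff' hmeas.aestronglyMeasurable).mpr ⟨.of_forall fun ω ↦
      integrable_exp_mul_mul_comp_exp_mul_mul hk (hZpos ω) hgint, ?_⟩
    simp only [hnorm]
    exact (hZint.div_const _).mul_const _
  calc ∫ c, exp (k * a * c) * ∫ ω, g (exp (k * c) * Z ω) ∂P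
      = ∫ ω, (∫ c, exp (k * a * c) * g (exp (k * c) * Z ω)) ∂P := by
        simp_rw [← integral_const_mul]; exact integral_integral_swap hprod
    _ = ∫ ω, Z ω ^ (-a) / |k| * (∫ y in Ioi 0, y ^ (a - 1) * g y) ∂P := by
        simp_rw [integral_exp_mul_mul_comp_exp_mul_mul hk (hZpos _)]
    _ = (∫ ω, Z ω ^ (-a) ∂P) / |k| * ∫ y in Ioi 0, y ^ (a - 1) * g y := by
        rw [integral_mul_const, integral_div]

lemma integrableOn_rpow_sub_one_mul_mul_exp_neg_mul {a μ : ℝ} (ha : 0 < a) (hμ : 0 < μ)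
    {G : ℝ → ℝ} (hG : Measurable G) (hGbd : ∃ C, ∀ y, |G y| ≤ C) :
    IntegrableOn (fun y ↦ y ^ (a - 1) * (G y * exp (-μ * y))) (Ioi 0) := by
  obtain ⟨C, hC⟩ := hGbd
  have hgamma : IntegrableOn (fun y ↦ y ^ (a - 1) * exp (-μ * y)) (Ioi 0) := by
    simpa using integrableOn_rpow_mul_exp_neg_mul_rpow (by linarith) zero_lt_one hμ
  refine (hgamma.bdd_mul hG.aestronglyMeasurable (.of_forall fun y ↦ hC y)).congr
    (.of_forall fun y ↦ ?_)
  ring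

theorem total_volume_gamma_law {Ω : Type*} [MeasureSpace Ω]
    [IsProbabilityMeasure (volume : Measure Ω)]
    (s d b μ : ℝ) (hs : 0 < s) (hd : 0 < d) (hb : 0 < b) (hμ : 0 < μ)
    (Z₀ : Ω → ℝ) (hZmeas : Measurable Z₀) (hZpos : ∀ ω, 0 < Z₀ ω)
    (hZint : Integrable (fun ω => Z₀ ω ^ (-(s / b))))
    (hZpos' : 0 < ∫ ω, Z₀ ω ^ (-(s / b)))
    (F : ℝ → ℝ) (hFmeas : Measurable F) (hFbd : ∃ C, ∀ y, |F y| ≤ C) :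
    (∫ c : ℝ, Real.exp (d * s * c) *
        ∫ ω, F (Real.exp (d * b * c) * Z₀ ω) * Real.exp (-μ * Real.exp (d * b * c) * Z₀ ω)) /
      (∫ c : ℝ, Real.exp (d * s * c) * ∫ ω, Real.exp (-μ * Real.exp (d * b * c) * Z₀ ω))
      = μ ^ (s / b) / Real.Gamma (s / b) *
          ∫ y in Set.Ioi (0 : ℝ), F y * y ^ (s / b - 1) * Real.exp (-μ * y) := by
  have ha : 0 < s / b := div_pos hs hb
  have hk : d * b ≠ 0 := (mul_pos hd hb).ne'
  have hds : d * s = d * b * (s / b) := by field_simp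
  have hexp : Measurable fun y ↦ exp (-μ * y) := by fun_prop
  have hgamma_int := integrableOn_rpow_sub_one_mul_mul_exp_neg_mul ha hμ measurable_const
    ⟨1, fun _ ↦ (abs_one (α := ℝ)).le⟩
  simp only [one_mul] at hgamma_int
  simp_rw [hds, mul_assoc (-μ)]
  rw [integral_exp_mul_mul_integral_comp_exp_mul_mul hZmeas hZpos hZint hk
      (g := fun y ↦ F y * exp (-μ * y)) (hFmeas.mul hexp)
      (integrableOn_rpow_sub_one_mul_mul_exp_neg_mul ha hμ hFmeas hFbd),
    integral_exp_mul_mul_integral_comp_exp_mul_mul hZmeas hZpos hZint hk hexp hgamma_int]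
  have hgamma :
      ∫ y in Ioi 0, y ^ (s / b - 1) * exp (-μ * y) = (1 / μ) ^ (s / b) * Gamma (s / b) := by
    simpa only [neg_mul] using integral_rpow_mul_exp_neg_mul_Ioi ha hμ
  have hreorder : ∫ y in Ioi 0, y ^ (s / b - 1) * (F y * exp (-μ * y))
      = ∫ y in Ioi 0, F y * y ^ (s / b - 1) * exp (-μ * y) := by
    congr 1; ext y; ring
  have hE : (∫ ω, Z₀ ω ^ (-(s / b))) / |d * b| ≠ 0 := div_ne_zero hZpos'.ne' (abs_ne_zero.mpr hk)
  rw [hgamma, hreorder, mul_div_mul_left _ _ hE, one_div, inv_rpow hμ.le]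
  simp only [div_eq_mul_inv, mul_inv, inv_inv]
  ring
end
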